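/- arXiv:2101.01496 — 2 statements merged into one kernel-verified Lean document; each statement's English description precedes it below -/
import Mathlib

section
/- Let n be a positive integer and let f : ℝ → ℝ be n times continuously differentiable on an open interval containing the point x. Then the n-th order backward difference quotients converge to the n-th derivative: the limit as h → 0⁺ of h^(−n) · Σ_{k=0}^{n} (−1)^k · (n choose k) · f(x − k·h) equals the n-th derivative f^(n)(x). -/
/-!
The backward sum is the iterated forward difference `Δₕⁿ f (x - n h)`, and applying the mean
value theorem once per order of differencing gives `Δₕⁿ f y = h ^ n * f⁽ⁿ⁾(ξ)` for some
`ξ ∈ [y, y + n h]`. Hence the difference quotient equals `f⁽ⁿ⁾(ξ_h)` with `ξ_h ∈ [x - n h, x]`,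
and it tends to `f⁽ⁿ⁾(x)` by continuity of `f⁽ⁿ⁾` at `x`.
-/

open Filter Set Topology
open scoped fwdDiff

theorem sum_backward_shift_eq_fwdDiff_iter (n : ℕ) (f : ℝ → ℝ) (x h : ℝ) :
    ∑ k ∈ Finset.range (n + 1), (-1 : ℝ) ^ k * (n.choose k : ℝ) * f (x - (k : ℝ) * h)
      = Δ_[h] ^[n] f (x - n * h) := by
  rw [fwdDiff_iter_eq_sum_shift, ← Finset.sum_range_reflect]
  refine Finset.sum_congr rfl fun k hk => ?_
  have hkn : k ≤ n := Nat.lt_succ_iff.mp (Finset.mem_range.mp hk)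
  have hshift : x - ((n - k : ℕ) : ℝ) * h = x - n * h + k * h := by
    rw [Nat.cast_sub hkn]; ring
  simp only [Nat.add_sub_cancel, Nat.choose_symm hkn, hshift, zsmul_eq_mul, nsmul_eq_mul]
  push_cast
  ring

theorem hasDerivAt_fwdDiff_iter {𝕜 F : Type*} [NontriviallyNormedField 𝕜] [NormedAddCommGroup F]
    [NormedSpace 𝕜 F] {f : 𝕜 → F} (h : 𝕜) (n : ℕ) {t : 𝕜}
    (hf : ∀ k ≤ n, DifferentiableAt 𝕜 f (t + k • h)) :
    HasDerivAt (Δ_[h] ^[n] f) (Δ_[h] ^[n] (deriv f) t) t := by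
  simp_rw [funext (fwdDiff_iter_eq_sum_shift h f n), fwdDiff_iter_eq_sum_shift]
  refine HasDerivAt.fun_sum fun k hk => ?_
  have hk : k ≤ n := Nat.lt_succ_iff.mp (Finset.mem_range.mp hk)
  exact ((hf k hk).hasDerivAt.comp_add_const t (k • h)).const_smul
    ((-1 : ℤ) ^ (n - k) * (n.choose k : ℤ))

theorem exists_fwdDiff_iter_eq_pow_mul_iteratedDeriv {f : ℝ → ℝ} {s : Set ℝ} {n : ℕ}
    (hs : IsOpen s) (hf : ContDiffOn ℝ n f s) {y h : ℝ} (hh : 0 < h)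
    (hys : Icc y (y + n * h) ⊆ s) :
    ∃ ξ ∈ Icc y (y + n * h), Δ_[h] ^[n] f y = h ^ n * iteratedDeriv n f ξ := by
  induction n generalizing f y with
  | zero => exact ⟨y, by simp, by simp⟩
  | succ n ih =>
    push_cast at hys ⊢
    have hdiff : DifferentiableOn ℝ f s := hf.differentiableOn (by simp)
    have hderiv : ∀ t ∈ Icc y (y + h),
        HasDerivAt (Δ_[h] ^[n] f) (Δ_[h] ^[n] (deriv f) t) t := by
      refine fun t ht => hasDerivAt_fwdDiff_iter h n fun k hk => ?_
      have hk : (k : ℝ) ≤ n := by exact_mod_cast hk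
      refine hdiff.differentiableAt (hs.mem_nhds (hys ⟨?_, ?_⟩))
      · rw [nsmul_eq_mul]; nlinarith [ht.1]
      · rw [nsmul_eq_mul]; nlinarith [ht.2]
    obtain ⟨c, hc, hslope⟩ := exists_hasDerivAt_eq_slope (Δ_[h] ^[n] f) _
      (lt_add_of_pos_right y hh) (fun t ht => (hderiv t ht).continuousAt.continuousWithinAt)
      (fun t ht => hderiv t (Ioo_subset_Icc_self ht))
    have hcs : Icc c (c + n * h) ⊆ Icc y (y + (n + 1) * h) :=
      Icc_subset_Icc (by linarith [hc.1]) (by linarith [hc.2])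
    obtain ⟨ξ, hξ, hξeq⟩ := ih (hf.deriv_of_isOpen hs (by norm_cast)) (hcs.trans hys)
    refine ⟨ξ, hcs hξ, ?_⟩
    calc Δ_[h] ^[n + 1] f y = Δ_[h] ^[n] f (y + h) - Δ_[h] ^[n] f y := by
          rw [Function.iterate_succ_apply']; rfl
      _ = h * Δ_[h] ^[n] (deriv f) c := by
          rw [hslope, add_sub_cancel_left]; field_simp
      _ = h ^ (n + 1) * iteratedDeriv (n + 1) f ξ := by
          rw [hξeq, iteratedDeriv_succ']; ring

theorem tendsto_of_eventually_eq_comp_mem_uIcc {α E : Type*} [TopologicalSpace E] {l : Filter α}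
    {u : α → ℝ} {F : α → E} {g : ℝ → E} {x : ℝ} (hg : ContinuousAt g x)
    (hu : Tendsto u l (𝓝 x)) (hF : ∀ᶠ a in l, ∃ ξ ∈ uIcc (u a) x, F a = g ξ) :
    Tendsto F l (𝓝 (g x)) := by
  refine fun U hU => mem_map.mpr ?_
  obtain ⟨ε, hε, hball⟩ := Metric.mem_nhds_iff.mp (hg hU)
  filter_upwards [hF, hu (Metric.ball_mem_nhds x hε)] with a ⟨ξ, hξ, hFa⟩ hua
  rw [mem_preimage, hFa]
  exact hball ((Real.ball_eq_Ioo x ε ▸ ordConnected_Ioo).uIcc_subset hua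
    (Metric.mem_ball_self hε) hξ)

theorem backward_difference_tendsto_iteratedDeriv_general
    (n : ℕ) (f : ℝ → ℝ) (a b x : ℝ) (hx : x ∈ Set.Ioo a b)
    (hf : ContDiffOn ℝ n f (Set.Ioo a b)) :
    Filter.Tendsto
      (fun h : ℝ => h ^ (-(n : ℤ)) *
        ∑ k ∈ Finset.range (n + 1), (-1 : ℝ) ^ k * (n.choose k : ℝ) * f (x - (k : ℝ) * h))
      (nhdsWithin 0 (Set.Ioi 0)) (nhds (iteratedDeriv n f x)) := by
  have hcont : ContinuousAt (iteratedDeriv n f) x :=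
    ((hf.continuousOn_iteratedDerivWithin le_rfl isOpen_Ioo.uniqueDiffOn).congr
      (iteratedDerivWithin_of_isOpen isOpen_Ioo).symm).continuousAt (isOpen_Ioo.mem_nhds hx)
  have hleft : Tendsto (fun h : ℝ => x - n * h) (𝓝[>] 0) (𝓝 x) :=
    ((continuous_const.sub (continuous_const.mul continuous_id)).tendsto' 0 x (by simp)).mono_left
      nhdsWithin_le_nhds
  refine tendsto_of_eventually_eq_comp_mem_uIcc hcont hleft ?_
  filter_upwards [self_mem_nhdsWithin, hleft (Ioi_mem_nhds hx.1)] with h (hh : 0 < h) ha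
  have hsub : Icc (x - n * h) (x - n * h + n * h) ⊆ Ioo a b := by
    rw [sub_add_cancel]; exact Icc_subset_Ioo ha hx.2
  obtain ⟨ξ, hξ, hξeq⟩ := exists_fwdDiff_iter_eq_pow_mul_iteratedDeriv isOpen_Ioo hf hh hsub
  refine ⟨ξ, Icc_subset_uIcc (by rwa [sub_add_cancel] at hξ), ?_⟩
  rw [sum_backward_shift_eq_fwdDiff_iter, hξeq, zpow_neg, zpow_natCast,
    inv_mul_cancel_left₀ (pow_ne_zero n hh.ne')]

/-- Backward-difference representation of the integer-order derivative:
if `f` is `n` times continuously differentiable on an open interval containing `x`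
(`n ≥ 1`), then the `n`-th order backward difference quotients
`h^(-n) * ∑_{k=0}^{n} (-1)^k (n choose k) f(x - k h)` converge, as `h → 0⁺`,
to the `n`-th derivative `f^(n)(x)`. -/
theorem backward_difference_tendsto_iteratedDeriv
    (n : ℕ) (hn : 0 < n) (f : ℝ → ℝ) (a b x : ℝ) (hx : x ∈ Set.Ioo a b)
    (hf : ContDiffOn ℝ n f (Set.Ioo a b)) :
    Filter.Tendsto
      (fun h : ℝ => h ^ (-(n : ℤ)) *
        ∑ k ∈ Finset.range (n + 1), (-1 : ℝ) ^ k * (n.choose k : ℝ) * f (x - (k : ℝ) * h))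
      (nhdsWithin 0 (Set.Ioi 0)) (nhds (iteratedDeriv n f x)) :=
  backward_difference_tendsto_iteratedDeriv_general n f a b x hx hf
end

section
/- Short Memory Principle error bound: let α > 0 be a real number that is not an integer, let 0 < a < x, let M ≥ 0, and let f : ℝ → ℝ be measurable with |f(τ)| ≤ M for all τ ∈ [0, x − a]. Then the truncation tail satisfies | (1/Γ(−α)) · ∫_{0}^{x−a} (x − τ)^(−α−1) · f(τ) dτ | ≤ M · a^(−α) / |Γ(1−α)|. -/
/-- Short Memory Principle error bound: for `α > 0` not an integer, `0 < a < x`,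
`M ≥ 0`, and `f` measurable with `|f τ| ≤ M` on `[0, x - a]`, the truncation tail
satisfies `|(1/Γ(-α)) ∫_0^{x-a} (x - τ)^(-α-1) f(τ) dτ| ≤ M a^(-α) / |Γ(1-α)|`. -/
theorem short_memory_error_bound
    (α : ℝ) (hα : 0 < α) (hαint : ∀ m : ℤ, α ≠ (m : ℝ))
    (a x M : ℝ) (ha : 0 < a) (hax : a < x) (hM : 0 ≤ M)
    (f : ℝ → ℝ) (hmeas : Measurable f)
    (hf : ∀ τ ∈ Set.Icc (0 : ℝ) (x - a), |f τ| ≤ M) :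
    |(1 / Real.Gamma (-α)) * ∫ τ in (0 : ℝ)..(x - a), (x - τ) ^ (-α - 1) * f τ| ≤
      M * a ^ (-α) / |Real.Gamma (1 - α)| := by
  have hb0 : 0 < x - a := by linarith
  have hx0 : 0 < x := by linarith
  have hΓne : Real.Gamma (-α) ≠ 0 := by
    apply Real.Gamma_ne_zero
    intro m h
    exact hαint m (by push_cast at h ⊢; linarith)
  have hΓ1 : Real.Gamma (1 - α) = -α * Real.Gamma (-α) := by
    have h := Real.Gamma_add_one (s := -α) (by
      intro h; exact hαint 0 (by push_cast; linarith))
    rw [show (1:ℝ) - α = -α + 1 by ring, h]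
  have habs : |Real.Gamma (1 - α)| = α * |Real.Gamma (-α)| := by
    rw [hΓ1, abs_mul, abs_neg, abs_of_pos hα]
  -- g is the kernel
  set g : ℝ → ℝ := fun τ => (x - τ) ^ (-α - 1) with hg
  have hgpos : ∀ τ ∈ Set.Icc (0 : ℝ) (x - a), 0 < g τ := fun τ hτ =>
    Real.rpow_pos_of_pos (by linarith [hτ.2]) _
  have hgle : ∀ τ ∈ Set.Icc (0 : ℝ) (x - a), g τ ≤ a ^ (-α - 1) := fun τ hτ =>
    Real.rpow_le_rpow_of_nonpos ha (by linarith [hτ.2]) (by linarith)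
  -- measurability / integrability
  have hgmeas : Measurable g := by fun_prop
  have hint : IntervalIntegrable (fun τ => g τ * f τ) MeasureTheory.volume 0 (x - a) := by
    rw [intervalIntegrable_iff_integrableOn_Ioc_of_le hb0.le]
    apply MeasureTheory.Integrable.mono' (g := fun _ => a ^ (-α - 1) * M)
      (MeasureTheory.integrable_const _)
      ((hgmeas.mul hmeas).aestronglyMeasurable)
    refine (MeasureTheory.ae_restrict_iff' measurableSet_Ioc).2 ?_
    filter_upwards with τ hτ
    have hτ' : τ ∈ Set.Icc (0 : ℝ) (x - a) := Set.Ioc_subset_Icc_self hτ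
    have := hf τ hτ'
    calc ‖g τ * f τ‖ = g τ * |f τ| := by
          rw [norm_mul, Real.norm_eq_abs, Real.norm_eq_abs,
            abs_of_pos (hgpos τ hτ')]
      _ ≤ a ^ (-α - 1) * M :=
          mul_le_mul (hgle τ hτ') this (abs_nonneg _) (Real.rpow_pos_of_pos ha _).le
  have hgcont : ContinuousOn g (Set.Icc (0 : ℝ) (x - a)) := by
    apply ContinuousOn.rpow_const (by fun_prop)
    intro τ hτ
    exact Or.inl (by linarith [hτ.2])
  have hgint : IntervalIntegrable (fun τ => M * g τ) MeasureTheory.volume 0 (x - a) :=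
    ((continuousOn_const.mul hgcont).intervalIntegrable_of_Icc hb0.le)
  -- value of the kernel integral
  have hgval : (∫ τ in (0 : ℝ)..(x - a), g τ) = (x ^ (-α) - a ^ (-α)) / (-α) := by
    have h1 : (∫ τ in (0 : ℝ)..(x - a), g τ)
        = ∫ t in (x - (x - a))..(x - 0), t ^ (-α - 1) :=
      intervalIntegral.integral_comp_sub_left (fun t => t ^ (-α - 1)) x
    rw [h1]
    have h2 : (0 : ℝ) ∉ Set.uIcc (x - (x - a)) (x - 0) := by
      rw [Set.mem_uIcc]
      push_neg
      constructor <;> intro h <;> simp at h <;> nlinarith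
    rw [integral_rpow (Or.inr ⟨by intro h; exact hαint 0 (by push_cast; linarith), h2⟩)]
    norm_num
  -- main integral bound
  have hmain : |∫ τ in (0 : ℝ)..(x - a), g τ * f τ| ≤ M * a ^ (-α) / α := by
    calc |∫ τ in (0 : ℝ)..(x - a), g τ * f τ|
        ≤ ∫ τ in (0 : ℝ)..(x - a), |g τ * f τ| :=
          intervalIntegral.abs_integral_le_integral_abs hb0.le
      _ ≤ ∫ τ in (0 : ℝ)..(x - a), M * g τ := by
          apply intervalIntegral.integral_mono_on hb0.le hint.abs hgint
          intro τ hτ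
          rw [abs_mul, abs_of_pos (hgpos τ hτ)]
          calc g τ * |f τ| ≤ g τ * M :=
                mul_le_mul_of_nonneg_left (hf τ hτ) (hgpos τ hτ).le
            _ = M * g τ := mul_comm _ _
      _ = M * ((x ^ (-α) - a ^ (-α)) / (-α)) := by
          rw [intervalIntegral.integral_const_mul, hgval]
      _ = M * ((a ^ (-α) - x ^ (-α)) / α) := by ring
      _ ≤ M * a ^ (-α) / α := by
          rw [mul_div_assoc]
          have hxpow : (0:ℝ) ≤ x ^ (-α) := (Real.rpow_pos_of_pos hx0 _).le
          gcongr
          linarith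
  calc |(1 / Real.Gamma (-α)) * ∫ τ in (0 : ℝ)..(x - a), g τ * f τ|
      = (1 / |Real.Gamma (-α)|) * |∫ τ in (0 : ℝ)..(x - a), g τ * f τ| := by
        rw [abs_mul, abs_div, abs_one]
    _ ≤ (1 / |Real.Gamma (-α)|) * (M * a ^ (-α) / α) := by
        apply mul_le_mul_of_nonneg_left hmain
        positivity
    _ = M * a ^ (-α) / |Real.Gamma (1 - α)| := by
        rw [habs]
        field_simp
end
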